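/- For a system-autonomous EOS event e = ⟨t, θ⟩ (θ assigns the empty multiset to every object net) that destroys types, one EOS step lifts to its conservative closure: if m →^{(e,λ,ρ)} m' in 𝔈, and k = Σ_{N ∈ destroy(t)} ⟨trash_N, 0⟩, then (λ, ρ + k) is an enabling mode of e^cons on m in 𝔈^cons and m →^{(e^cons, λ, ρ+k)} m' + k. -/

import Mathlib

/-- Object-level projection: sum of internal markings of the tokens lying on
places of type `n`. -/
def proj2 {Phat Nty Q : Type*} [DecidableEq Nty] (d : Phat → Nty) (n : Nty)
    (μ : Multiset (Phat × Multiset Q)) : Multiset Q :=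
  ((μ.filter fun c => d c.1 = n).map Prod.snd).sum

theorem proj2_add {Phat Nty Q : Type*} [DecidableEq Nty] (d : Phat → Nty) (n : Nty)
    (μ ν : Multiset (Phat × Multiset Q)) :
    proj2 d n (μ + ν) = proj2 d n μ + proj2 d n ν := by
  simp [proj2, Multiset.filter_add]

theorem proj2_iota {P N Q : Type*} [DecidableEq N] (d : P → N) (n : N)
    (μ : Multiset (P × Multiset Q)) :
    proj2 (Sum.elim d id) n (μ.map fun c => ((Sum.inl c.1 : P ⊕ N), c.2))
      = proj2 d n μ := by
  simp [proj2, Multiset.filter_map, Multiset.map_map, Function.comp_def]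
  rfl

/-- One step of a system-autonomous EOS event `e = ⟨t,θ⟩` (with `θ` empty
everywhere) lifts to the conservative closure: if `m →^{(e,λ,ρ)} m'` in `𝔈`
and `k = Σ_{n ∈ destroy(t)} ⟨trash_n, 0⟩`, then `(λ, ρ + k)` is an enabling
mode of `e^cons` on `m` in `𝔈^cons` (whose pre is `pre(t)` injected, and whose
post adds one trash token per destroyed type), and the resulting step yields
`m' + k`.  System places of the closure are `P ⊕ N`, the trash place of type
`n` being `Sum.inr n`, typed by `Sum.elim d id`; `ι` injects nested markings
of `𝔈` into those of `𝔈^cons`. -/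
theorem system_autonomous_step_lifts_to_closure {P N Q : Type*}
    [DecidableEq P] [DecidableEq N] [DecidableEq Q]
    (d : P → N)
    (preT postT : Multiset P)
    (lam rho m m' : Multiset (P × Multiset Q))
    (hpre : lam.map Prod.fst = preT)
    (hpost : rho.map Prod.fst = postT)
    (hobj : ∀ n : N, proj2 d n lam = proj2 d n rho)
    (hle : lam ≤ m)
    (hstep : m' = m - lam + rho)
    (S : Finset N)
    (hS : ∀ n : N, n ∈ S ↔ ((∃ p ∈ preT, d p = n) ∧ ∀ q ∈ postT, d q ≠ n))
    (k : Multiset ((P ⊕ N) × Multiset Q))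
    (hk : k = S.val.map fun n => ((Sum.inr n : P ⊕ N), (0 : Multiset Q)))
    (ι : Multiset (P × Multiset Q) → Multiset ((P ⊕ N) × Multiset Q))
    (hι : ∀ μ, ι μ = μ.map fun c => ((Sum.inl c.1 : P ⊕ N), c.2)) :
    (ι lam).map Prod.fst = preT.map Sum.inl ∧
    (ι rho + k).map Prod.fst = postT.map Sum.inl + S.val.map Sum.inr ∧
    (∀ n : N, proj2 (Sum.elim d id) n (ι lam)
      = proj2 (Sum.elim d id) n (ι rho + k)) ∧
    ι lam ≤ ι m ∧
    ι m - ι lam + (ι rho + k) = ι m' + k := by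
  have hk0 : ∀ n : N, proj2 (Sum.elim d id) n k = 0 := by
    intro n
    subst hk
    simp [proj2, Multiset.filter_map, Multiset.map_map, Function.comp]
  refine ⟨?_, ?_, ?_, ?_, ?_⟩
  · rw [hι, Multiset.map_map, ← hpre, Multiset.map_map]
    rfl
  · rw [hι, hk]
    simp only [Multiset.map_add, Multiset.map_map]
    rw [← hpost, Multiset.map_map]
    rfl
  · intro n
    rw [proj2_add, hk0, add_zero, hι, hι, proj2_iota, proj2_iota, hobj]
  · rw [hι, hι]
    exact Multiset.map_le_map hle
  · have hinj : Function.Injective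
        (fun c : P × Multiset Q => ((Sum.inl c.1 : P ⊕ N), c.2)) := by
      intro a b h
      simp only [Prod.mk.injEq, Sum.inl.injEq] at h
      exact Prod.ext h.1 h.2
    obtain ⟨c, rfl⟩ := Multiset.le_iff_exists_add.mp hle
    rw [hstep, hι, hι, hι, hι]
    simp [Multiset.map_add, add_tsub_cancel_left]
    exact (add_assoc _ _ _).symm
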